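/- arXiv:2009.09037 — 10 statements merged into one kernel-verified Lean document; each statement's English description precedes it below -/
import Mathlib

section
/- Let G be a bipartite graph on n vertices. Then the number of 4-element vertex subsets of G inducing two disjoint edges is at most n^4 / 256. -/
/-!
Orienting its edges from `M` to `P`, an induced 2K₂ becomes a pair of edges `xy`, `zw` with
`x, z ∈ M`, `y, w ∈ P`, `x ≁ w`, `z ≁ y`, and it comes from the two ordered pairs `(xy, zw)` and
`(zw, xy)`. For fixed `x, z` there are `a(x,z) a(z,x)` choices of `(y, w)`, where
`a(x,z) = |N(x) \ N(z)|`; as `a(x,z) + a(z,x) ≤ |P|`, AM-GM bounds this by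
`|P| (a(x,z) + a(z,x)) / 4`.
Finally `∑ a(x,z) = ∑_{y ∈ P} deg y (|M| - deg y) ≤ |P| |M|² / 4`, so there are at most
`|M|² |P|² / 8` ordered pairs, and `16 |M|² |P|² ≤ (|M| + |P|)⁴ ≤ n⁴`.
-/

section

open Finset

variable {α β : Type*} (r : α → β → Prop) [DecidableRel r] (s : Finset α) (t : Finset β)

def inducedTwoMatchings : Finset ((α × β) × (α × β)) :=
  ((s ×ˢ t) ×ˢ (s ×ˢ t)).filter fun e =>
    r e.1.1 e.1.2 ∧ r e.2.1 e.2.2 ∧ ¬ r e.1.1 e.2.2 ∧ ¬ r e.2.1 e.1.2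

theorem card_inducedTwoMatchings :
    #(inducedTwoMatchings r s t) = ∑ x ∈ s, ∑ z ∈ s,
      #{y ∈ t | r x y ∧ ¬ r z y} * #{w ∈ t | r z w ∧ ¬ r x w} := by
  simp only [inducedTwoMatchings, card_filter, sum_product, sum_mul_sum]
  refine sum_congr rfl fun x _ => ?_
  rw [sum_comm]
  refine sum_congr rfl fun z _ => ?_
  refine sum_congr rfl fun y _ => sum_congr rfl fun w _ => ?_
  by_cases r x y <;> by_cases r z w <;> by_cases r x w <;> by_cases r z y <;> simp [*]

theorem card_filter_and_not_add_le (x z : α) :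
    #{y ∈ t | r x y ∧ ¬ r z y} + #{y ∈ t | r z y ∧ ¬ r x y} ≤ #t := by
  classical
  rw [← card_union_of_disjoint (disjoint_filter.2 fun _ _ h h' => h'.2 h.1), ← filter_or]
  exact card_filter_le _ _

theorem sum_sum_card_filter_and_not :
    ∑ x ∈ s, ∑ z ∈ s, #{y ∈ t | r x y ∧ ¬ r z y} =
      ∑ y ∈ t, #{x ∈ s | r x y} * #{z ∈ s | ¬ r z y} := by
  simp only [card_filter, sum_mul_sum, ite_zero_mul_ite_zero, mul_one]
  rw [eq_comm, sum_comm]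
  exact sum_congr rfl fun _ _ => sum_comm

theorem four_mul_sum_sum_card_filter_and_not_le :
    4 * ∑ x ∈ s, ∑ z ∈ s, #{y ∈ t | r x y ∧ ¬ r z y} ≤ #t * #s ^ 2 := by
  rw [sum_sum_card_filter_and_not, mul_sum]
  calc ∑ y ∈ t, 4 * (#{x ∈ s | r x y} * #{z ∈ s | ¬ r z y})
      ≤ ∑ y ∈ t, #s ^ 2 := sum_le_sum fun y _ => by
        rw [← mul_assoc, ← card_filter_add_card_filter_not (s := s) (fun x => r x y)]
        exact four_mul_le_sq_add _ _
    _ = #t * #s ^ 2 := by rw [sum_const, smul_eq_mul]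

theorem four_mul_le_mul_add_of_add_le {a b c : ℕ} (h : a + b ≤ c) : 4 * (a * b) ≤ c * (a + b) :=
  calc 4 * (a * b) = 4 * a * b := (mul_assoc ..).symm
    _ ≤ (a + b) ^ 2 := four_mul_le_sq_add a b
    _ = (a + b) * (a + b) := sq _
    _ ≤ c * (a + b) := Nat.mul_le_mul_right _ h

theorem eight_mul_card_inducedTwoMatchings_le :
    8 * #(inducedTwoMatchings r s t) ≤ #s ^ 2 * #t ^ 2 := by
  have hA := four_mul_sum_sum_card_filter_and_not_le r s t
  set A := ∑ x ∈ s, ∑ z ∈ s, #{y ∈ t | r x y ∧ ¬ r z y}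
  have hswap : ∑ x ∈ s, ∑ z ∈ s, #{y ∈ t | r z y ∧ ¬ r x y} = A := sum_comm
  have h4 : 4 * #(inducedTwoMatchings r s t) ≤ 2 * #t * A :=
    calc 4 * #(inducedTwoMatchings r s t)
        = ∑ x ∈ s, ∑ z ∈ s, 4 * (#{y ∈ t | r x y ∧ ¬ r z y} * #{y ∈ t | r z y ∧ ¬ r x y}) := by
          simp only [card_inducedTwoMatchings, mul_sum]
      _ ≤ ∑ x ∈ s, ∑ z ∈ s, #t * (#{y ∈ t | r x y ∧ ¬ r z y} + #{y ∈ t | r z y ∧ ¬ r x y}) :=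
          sum_le_sum fun x _ => sum_le_sum fun z _ =>
            four_mul_le_mul_add_of_add_le (card_filter_and_not_add_le r t x z)
      _ = 2 * #t * A := by simp only [← mul_sum, sum_add_distrib, hswap]; ring
  nlinarith [Nat.mul_le_mul_left (2 * #t) hA]

theorem swap_mem_inducedTwoMatchings {e : (α × β) × (α × β)}
    (he : e ∈ inducedTwoMatchings r s t) : e.swap ∈ inducedTwoMatchings r s t := by
  obtain ⟨hmem, hxy, hzw, hxw, hzy⟩ := mem_filter.1 he
  exact mem_filter.2 ⟨mem_product.2 (mem_product.1 hmem).symm, hzw, hxy, hzy, hxw⟩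

theorem swap_ne_of_mem_inducedTwoMatchings {e : (α × β) × (α × β)}
    (he : e ∈ inducedTwoMatchings r s t) : e.swap ≠ e := by
  obtain ⟨-, -, hzw, hxw, -⟩ := mem_filter.1 he
  intro h
  rw [← congrArg (·.1.1) h] at hxw
  exact hxw hzw

section Graph

variable {V : Type*} [DecidableEq V]

def edgePairVertices (e : (V × V) × (V × V)) : Finset V := {e.1.1, e.1.2, e.2.1, e.2.2}

theorem edgePairVertices_swap (e : (V × V) × (V × V)) :
    edgePairVertices e.swap = edgePairVertices e := by
  ext
  simp only [edgePairVertices, Prod.fst_swap, Prod.snd_swap, mem_insert, mem_singleton]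
  tauto

theorem two_mul_card_le_card_inducedTwoMatchings (r : V → V → Prop) [DecidableRel r]
    (s t : Finset V) {T : Finset (Finset V)}
    (hT : ∀ S ∈ T, ∃ e ∈ inducedTwoMatchings r s t, edgePairVertices e = S) :
    2 * #T ≤ #(inducedTwoMatchings r s t) := by
  rw [mul_comm, ← mul_one #(inducedTwoMatchings r s t)]
  refine card_mul_le_card_mul (fun S e => edgePairVertices e = S) (fun S hS => ?_)
    fun e _ => card_le_one.2 fun S₁ h₁ S₂ h₂ =>
      (mem_filter.1 h₁).2.symm.trans (mem_filter.1 h₂).2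
  obtain ⟨e, he, rfl⟩ := hT S hS
  exact one_lt_card.2 ⟨e.swap,
    mem_filter.2 ⟨swap_mem_inducedTwoMatchings r s t he, edgePairVertices_swap e⟩,
    e, mem_filter.2 ⟨he, rfl⟩, swap_ne_of_mem_inducedTwoMatchings r s t he⟩

theorem SimpleGraph.exists_mem_inducedTwoMatchings (G : SimpleGraph V) [DecidableRel G.Adj]
    {M P : Finset V} (hadj : ∀ u v, G.Adj u v → (u ∈ M ∧ v ∈ P) ∨ (u ∈ P ∧ v ∈ M))
    {a b c d : V} (hab : G.Adj a b) (hcd : G.Adj c d) (hac : ¬ G.Adj a c) (had : ¬ G.Adj a d)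
    (hbc : ¬ G.Adj b c) (hbd : ¬ G.Adj b d) :
    ∃ e ∈ inducedTwoMatchings G.Adj M P, edgePairVertices e = {a, b, c, d} := by
  wlog habMP : a ∈ M ∧ b ∈ P generalizing a b
  · obtain ⟨e, he, hS⟩ := this hab.symm hbc hbd hac had ((hadj a b hab).resolve_left habMP).symm
    exact ⟨e, he, hS.trans (insert_comm ..)⟩
  wlog hcdMP : c ∈ M ∧ d ∈ P generalizing c d
  · obtain ⟨e, he, hS⟩ := this hcd.symm had hac hbd hbc ((hadj c d hcd).resolve_left hcdMP).symm
    exact ⟨e, he, hS.trans (by rw [pair_comm])⟩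
  exact ⟨((a, b), (c, d)), mem_filter.2 ⟨by simp [*], hab, hcd, had, fun h => hbc h.symm⟩, rfl⟩

end Graph

theorem sixteen_mul_sq_mul_sq_le (m p : ℕ) : 16 * (m ^ 2 * p ^ 2) ≤ (m + p) ^ 4 :=
  calc 16 * (m ^ 2 * p ^ 2) = (4 * m * p) ^ 2 := by ring
    _ ≤ ((m + p) ^ 2) ^ 2 := Nat.pow_le_pow_left (four_mul_le_sq_add m p) 2
    _ = (m + p) ^ 4 := by ring

end

open scoped Classical

/-- In a bipartite graph on `n` vertices, the number of 4-element vertex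
subsets inducing two disjoint edges is at most `n^4 / 256`. -/
theorem stmt1 {V : Type*} [Fintype V] (G : SimpleGraph V) (n : ℕ)
    (hn : Fintype.card V = n)
    (hbip : ∃ M P : Finset V, Disjoint M P ∧ M ∪ P = Finset.univ ∧
      ∀ u v, G.Adj u v → (u ∈ M ∧ v ∈ P) ∨ (u ∈ P ∧ v ∈ M)) :
    256 * ((Finset.univ.powersetCard 4).filter (fun s : Finset V =>
        ∃ a b c d : V, s = {a, b, c, d} ∧
          a ≠ b ∧ a ≠ c ∧ a ≠ d ∧ b ≠ c ∧ b ≠ d ∧ c ≠ d ∧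
          G.Adj a b ∧ G.Adj c d ∧
          ¬ G.Adj a c ∧ ¬ G.Adj a d ∧ ¬ G.Adj b c ∧ ¬ G.Adj b d)).card
      ≤ n ^ 4 := by
  obtain ⟨M, P, hMP, -, hadj⟩ := hbip
  have hMP_card : M.card + P.card ≤ n :=
    hn ▸ Finset.card_union_of_disjoint hMP ▸ Finset.card_le_univ _
  have h8 := eight_mul_card_inducedTwoMatchings_le G.Adj M P
  calc 256 * _ = 128 * (2 * _) := by ring
    _ ≤ 128 * (inducedTwoMatchings G.Adj M P).card := by
      gcongr
      refine two_mul_card_le_card_inducedTwoMatchings G.Adj M P fun S hS => ?_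
      obtain ⟨-, a, b, c, d, rfl, -, -, -, -, -, -, hab, hcd, hac, had, hbc, hbd⟩ :=
        Finset.mem_filter.1 hS
      exact G.exists_mem_inducedTwoMatchings hadj hab hcd hac had hbc hbd
    _ ≤ 16 * (M.card ^ 2 * P.card ^ 2) := by omega
    _ ≤ (M.card + P.card) ^ 4 := sixteen_mul_sq_mul_sq_le _ _
    _ ≤ n ^ 4 := Nat.pow_le_pow_left hMP_card 4
end

section
/- Let G be a bipartite graph with bipartition M, P, |M| = m, |P| = p, with degrees r_i of vertices in M and c_j of vertices in P, and common-neighbor counts t_{i,j}. Then Σ_{i<j} [(r_i − t_{i,j}) + (r_j − t_{i,j})] ≤ m^2 · p / 4. -/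
/-!
With `a i k` the indicator of `u i ~ v k`, the summand for `i < j` is
`r i + r j - 2 t i j = ∑ k, (a i k - a j k) ^ 2`. Swapping the sums, column `k` contributes
the number of pairs `i < j` separated by the neighbourhood of `v k`; if that neighbourhood has
`s` elements this is `s (m - s) = (m ^ 2 - (m - 2 s) ^ 2) / 4 ≤ m ^ 2 / 4`.
-/

open Finset

namespace Finset

theorem sum_sum_eq_two_nsmul_sum_sum_Ioi {ι M : Type*} [Fintype ι] [LinearOrder ι]
    [LocallyFiniteOrderTop ι] [AddCommMonoid M] (f : ι → ι → M)
    (hsymm : ∀ i j, f i j = f j i) (hdiag : ∀ i, f i i = 0) :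
    ∑ i, ∑ j, f i j = 2 • ∑ i, ∑ j ∈ Ioi i, f i j := by
  have hsplit : ∀ i, ∑ j, f i j = ∑ j with j < i, f i j + ∑ j ∈ Ioi i, f i j := by
    intro i
    rw [← sum_filter_add_sum_filter_not univ (· < i)]
    congr 1
    refine (sum_subset (fun j hj => by simpa using (mem_Ioi.1 hj).le) fun j hj hji => ?_).symm
    obtain rfl : j = i := le_antisymm (by simpa using hji) (by simpa using hj)
    exact hdiag j
  have hswap : ∑ i, ∑ j with j < i, f i j = ∑ i, ∑ j ∈ Ioi i, f i j := by
    rw [sum_comm' (t' := univ) (s' := Ioi)]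
    · simp_rw [hsymm]
    · simp
  rw [sum_congr rfl fun i _ => hsplit i, sum_add_distrib, hswap, two_nsmul]

theorem sum_sum_sub_sq {ι R : Type*} [Fintype ι] [CommRing R] (b : ι → R) :
    ∑ i, ∑ j, (b i - b j) ^ 2
      = 2 * Fintype.card ι * ∑ i, b i ^ 2 - 2 * (∑ i, b i) ^ 2 := by
  simp only [sub_sq, sum_add_distrib, sum_sub_distrib, sum_const, card_univ, nsmul_eq_mul,
    ← mul_sum, ← sum_mul]
  ring

theorem four_mul_sum_sum_Ioi_sub_sq_le {ι R : Type*} [Fintype ι] [LinearOrder ι]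
    [LocallyFiniteOrderTop ι] [CommRing R] [LinearOrder R] [IsStrictOrderedRing R]
    (b : ι → R) (hb : ∀ i, IsIdempotentElem (b i)) :
    4 * ∑ i, ∑ j ∈ Ioi i, (b i - b j) ^ 2 ≤ (Fintype.card ι : R) ^ 2 := by
  have hsq : ∑ i, b i ^ 2 = ∑ i, b i := sum_congr rfl fun i _ => (sq (b i)).trans (hb i)
  have hfull := sum_sum_eq_two_nsmul_sum_sum_Ioi (fun i j => (b i - b j) ^ 2)
    (fun i j => by ring) (fun i => by simp)
  rw [sum_sum_sub_sq, hsq, two_nsmul] at hfull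
  nlinarith [sq_nonneg ((Fintype.card ι : R) - 2 * ∑ i, b i)]

theorem card_filter_sub_card_filter_and_add {β R : Type*} [Fintype β] [CommRing R]
    (P Q : β → Prop) [DecidablePred P] [DecidablePred Q] :
    ((#{k | P k} : R) - #{k | P k ∧ Q k}) + (#{k | Q k} - #{k | P k ∧ Q k})
      = ∑ k, ((if P k then 1 else 0) - (if Q k then 1 else 0)) ^ 2 := by
  simp only [card_filter, Nat.cast_sum, Nat.cast_ite, Nat.cast_one, Nat.cast_zero,
    ← sum_sub_distrib, ← sum_add_distrib]
  refine sum_congr rfl fun k _ => ?_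
  by_cases hP : P k <;> by_cases hQ : Q k <;> simp [hP, hQ]

end Finset

theorem SimpleGraph.degree_eq_card_filter_adj {V β : Type*} (G : SimpleGraph V)
    [DecidableRel G.Adj] [Fintype β] (v : β ↪ V) (x : V) [Fintype (G.neighborSet x)]
    (hx : ∀ y, G.Adj x y → y ∈ Set.range v) :
    G.degree x = #{k | G.Adj x (v k)} := by
  rw [← card_neighborFinset_eq_degree, ← card_map v]
  congr 1
  ext y
  simp only [mem_neighborFinset, mem_map, mem_filter, mem_univ, true_and]
  refine ⟨fun hy => ?_, fun ⟨k, hk, hky⟩ => hky ▸ hk⟩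
  obtain ⟨k, rfl⟩ := hx y hy
  exact ⟨k, hy, rfl⟩

open scoped Classical

theorem stmt3_general {V : Type*} [Fintype V] (G : SimpleGraph V)
    (m p : ℕ) (u : Fin m ↪ V) (v : Fin p ↪ V)
    (hdisj : ∀ i j, u i ≠ v j)
    (hbip : ∀ x y, G.Adj x y →
      ((∃ i, u i = x) ∧ (∃ j, v j = y)) ∨ ((∃ j, v j = x) ∧ (∃ i, u i = y))) :
    4 * (∑ i : Fin m, ∑ j ∈ Finset.Ioi i,
        (((G.degree (u i) : ℤ) -
            ((Finset.univ.filter fun k : Fin p => G.Adj (u i) (v k) ∧ G.Adj (u j) (v k)).card : ℤ)) +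
         ((G.degree (u j) : ℤ) -
            ((Finset.univ.filter fun k : Fin p => G.Adj (u i) (v k) ∧ G.Adj (u j) (v k)).card : ℤ))))
      ≤ (m : ℤ) ^ 2 * (p : ℤ) := by
  have hdeg : ∀ i, G.degree (u i) = #{k | G.Adj (u i) (v k)} := fun i =>
    G.degree_eq_card_filter_adj v (u i) fun y hy => by
      rcases hbip _ _ hy with ⟨-, hy⟩ | ⟨⟨j, hj⟩, -⟩
      · exact hy
      · exact absurd hj.symm (hdisj i j)
  let b : Fin p → Fin m → ℤ := fun k i => if G.Adj (u i) (v k) then 1 else 0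
  calc _ = ∑ k, 4 * ∑ i, ∑ j ∈ Ioi i, (b k i - b k j) ^ 2 := by
        simp_rw [hdeg, card_filter_sub_card_filter_and_add, ← mul_sum]
        congr 1
        exact (sum_congr rfl fun i _ => sum_comm).trans sum_comm
    _ ≤ ∑ _k : Fin p, (m : ℤ) ^ 2 := sum_le_sum fun k _ => by
        simpa using four_mul_sum_sum_Ioi_sub_sq_le (b k) fun i => by
          by_cases h : G.Adj (u i) (v k) <;> simp [b, h, IsIdempotentElem]
    _ = (m : ℤ) ^ 2 * p := by simp [mul_comm]

/-- In a bipartite graph with parts of sizes `m` and `p`,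
`∑_{i<j} [(r i − t i j) + (r j − t i j)] ≤ m^2 · p / 4`. -/
theorem stmt3 {V : Type*} [Fintype V] (G : SimpleGraph V)
    (m p : ℕ) (u : Fin m ↪ V) (v : Fin p ↪ V)
    (hcover : ∀ x : V, (∃ i, u i = x) ∨ (∃ j, v j = x))
    (hdisj : ∀ i j, u i ≠ v j)
    (hbip : ∀ x y, G.Adj x y →
      ((∃ i, u i = x) ∧ (∃ j, v j = y)) ∨ ((∃ j, v j = x) ∧ (∃ i, u i = y))) :
    4 * (∑ i : Fin m, ∑ j ∈ Finset.Ioi i,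
        (((G.degree (u i) : ℤ) -
            ((Finset.univ.filter fun k : Fin p => G.Adj (u i) (v k) ∧ G.Adj (u j) (v k)).card : ℤ)) +
         ((G.degree (u j) : ℤ) -
            ((Finset.univ.filter fun k : Fin p => G.Adj (u i) (v k) ∧ G.Adj (u j) (v k)).card : ℤ))))
      ≤ (m : ℤ) ^ 2 * (p : ℤ) :=
  stmt3_general G m p u v hdisj hbip
end

section
/- For all positive integers n and all integers m with 0 ≤ m ≤ n, (n − m)·m·(m − 1)/2 ≤ (n − ⌈2n/3⌉)·⌈2n/3⌉·(⌈2n/3⌉ − 1)/2; in particular the quantity (n−m)·m·(m−1) over 0 ≤ m ≤ n is maximized at m = ⌈2n/3⌉. -/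
/-!
Writing `f(x) = (n - x) x (x - 1)`, one has `f(x + 1) - f(x) = x (2n - 3x - 1)`, which is
nonnegative for `x < c` and nonpositive for `x ≥ c`, where `c = ⌊(2n + 2) / 3⌋ = ⌈2n / 3⌉`.
So `f` increases up to `c` and decreases after it, and `f(m) ≤ f(c)` for every `m`.
-/

def cubicProfile (n x : ℕ) : ℤ := ((n : ℤ) - x) * x * (x - 1)

lemma cubicProfile_succ_sub (n x : ℕ) :
    cubicProfile n (x + 1) - cubicProfile n x = x * (2 * n - 3 * x - 1) := by
  simp only [cubicProfile]
  push_cast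
  ring

lemma cubicProfile_monotoneOn (n : ℕ) :
    MonotoneOn (cubicProfile n) (Set.Iic ((2 * n + 2) / 3)) := by
  refine monotoneOn_of_le_succ Set.ordConnected_Iic fun x _ _ hx => ?_
  rw [Set.mem_Iic, Order.succ_eq_add_one] at hx
  rw [Order.succ_eq_add_one]
  have hpos : (0 : ℤ) ≤ 2 * n - 3 * x - 1 := by omega
  linarith [cubicProfile_succ_sub n x, mul_nonneg (Int.natCast_nonneg x) hpos]

lemma cubicProfile_antitoneOn (n : ℕ) :
    AntitoneOn (cubicProfile n) (Set.Ici ((2 * n + 2) / 3)) := by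
  refine antitoneOn_of_succ_le Set.ordConnected_Ici fun x _ hx _ => ?_
  rw [Set.mem_Ici] at hx
  rw [Order.succ_eq_add_one]
  have hneg : 2 * n - 3 * x - 1 ≤ (0 : ℤ) := by omega
  linarith [cubicProfile_succ_sub n x,
    mul_nonpos_of_nonneg_of_nonpos (Int.natCast_nonneg x) hneg]

lemma cubicProfile_le (n m : ℕ) : cubicProfile n m ≤ cubicProfile n ((2 * n + 2) / 3) := by
  rcases le_total m ((2 * n + 2) / 3) with h | h
  · exact cubicProfile_monotoneOn n h Set.self_mem_Iic h
  · exact cubicProfile_antitoneOn n Set.self_mem_Ici h h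

lemma natCast_sub_mul_mul_sub_one {n m : ℕ} (hm : m ≤ n) :
    (((n - m) * m * (m - 1) : ℕ) : ℤ) = cubicProfile n m := by
  rcases Nat.eq_zero_or_pos m with rfl | hm0
  · simp [cubicProfile]
  · push_cast [hm, hm0]
    rfl

lemma toNat_ceil_two_mul_div_three (n : ℕ) :
    ⌈(2 * n : ℚ) / 3⌉.toNat = (2 * n + 2) / 3 := by
  obtain ⟨c, hc⟩ : ∃ c, c = (2 * n + 2) / 3 := ⟨_, rfl⟩
  have hlo : (2 * n : ℚ) ≤ 3 * c := by exact_mod_cast (show 2 * n ≤ 3 * c by omega)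
  have hhi : (3 * c : ℚ) ≤ 2 * n + 2 := by exact_mod_cast (show 3 * c ≤ 2 * n + 2 by omega)
  rw [← hc, (Int.ceil_eq_iff (z := c)).mpr (by push_cast; constructor <;> linarith),
    Int.toNat_natCast]

theorem stmt5_general (n : ℕ) (m : ℕ) (hm : m ≤ n) :
    (n - m) * m * (m - 1) / 2 ≤
      (n - (⌈(2 * n : ℚ) / 3⌉).toNat) * (⌈(2 * n : ℚ) / 3⌉).toNat *
        ((⌈(2 * n : ℚ) / 3⌉).toNat - 1) / 2 := by
  rw [toNat_ceil_two_mul_div_three]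
  have hc : (2 * n + 2) / 3 ≤ n := by omega
  refine Nat.div_le_div_right ?_
  have hmax := cubicProfile_le n m
  rw [← natCast_sub_mul_mul_sub_one hm, ← natCast_sub_mul_mul_sub_one hc] at hmax
  exact_mod_cast hmax

/-- For `0 ≤ m ≤ n`, `(n−m)·m·(m−1)/2` is maximized at `m = ⌈2n/3⌉`. -/
theorem stmt5 (n : ℕ) (hn : 0 < n) (m : ℕ) (hm : m ≤ n) :
    (n - m) * m * (m - 1) / 2 ≤
      (n - (⌈(2 * n : ℚ) / 3⌉).toNat) * (⌈(2 * n : ℚ) / 3⌉).toNat *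
        ((⌈(2 * n : ℚ) / 3⌉).toNat - 1) / 2 :=
  stmt5_general n m hm
end

section
/- Let A(d,n) be a set of sequences of d distinct elements of an n-set satisfying Property U. Then no two distinct sequences in A(d,n) have the same underlying set of d elements. -/
/-!
If `w` and `x` have the same underlying set, the initial segment of `w` of length `d - 1`
appears in `x`, so by Property U it is the initial segment of `x` read forwards or backwards.
Injectivity and the equality of ranges then force the one remaining entry, so `x = w` or
`x = w ∘ Fin.rev`, and the second alternative is excluded by Property U (2).
-/

/-- Property U for a family of `d`-sequences (maps `Fin d → S`):
(1) if an end-segment (the set of the first `j` or the last `j` elements, `1 ≤ j < d`)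
of `w` has all its elements appearing in `x`, then it is an end-segment of `x`
with the elements in the same order (possibly at the other end, reversed);
(2) a sequence and its reversal are not both in the family (unless `d = 1`). -/
def PropertyU {S : Type*} {d : ℕ} (A : Set (Fin d → S)) : Prop :=
  (∀ w ∈ A, ∀ x ∈ A, ∀ j : ℕ, 1 ≤ j → j < d →
    ((∀ i : Fin d, (i : ℕ) < j → ∃ k : Fin d, x k = w i) →
      ((∀ i : Fin d, (i : ℕ) < j → x i = w i) ∨
       (∀ i : Fin d, (i : ℕ) < j → x (Fin.rev i) = w i))) ∧
    ((∀ i : Fin d, d - j ≤ (i : ℕ) → ∃ k : Fin d, x k = w i) →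
      ((∀ i : Fin d, d - j ≤ (i : ℕ) → x i = w i) ∨
       (∀ i : Fin d, d - j ≤ (i : ℕ) → x (Fin.rev i) = w i)))) ∧
  (2 ≤ d → ∀ w ∈ A, (w ∘ Fin.rev) ∉ A)

open Set

namespace Function.Injective

variable {α β : Type*} {f g : α → β}

theorem apply_eq_of_range_subset (hg : Injective g) (hgf : range g ⊆ range f) {i₀ : α}
    (h : ∀ i ≠ i₀, g i = f i) : g i₀ = f i₀ := by
  obtain ⟨k, hk⟩ := hgf (mem_range_self i₀)
  obtain rfl : k = i₀ := by
    by_contra hki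
    exact hki (hg ((h k hki).trans hk))
  exact hk.symm

theorem eq_of_range_subset (hg : Injective g) (hgf : range g ⊆ range f) (i₀ : α)
    (h : ∀ i ≠ i₀, g i = f i) : g = f := by
  funext i
  by_cases hi : i = i₀
  · subst hi
    exact hg.apply_eq_of_range_subset hgf h
  · exact h i hi

end Function.Injective

namespace PropertyU

variable {S : Type*} {d : ℕ} {A : Set (Fin d → S)} {w x : Fin d → S}

theorem eq_of_range_eq_of_two_le (hU : PropertyU A) (hd : 2 ≤ d) (hw : w ∈ A) (hx : x ∈ A)
    (hxinj : Function.Injective x) (hr : range w = range x) : w = x := by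
  obtain ⟨m, rfl⟩ := Nat.exists_eq_add_of_le' hd
  have hwx : ∀ i : Fin (m + 2), (i : ℕ) < m + 1 → ∃ k, x k = w i :=
    fun i _ => hr.subset (mem_range_self i)
  rcases (hU.1 w hw x hx (m + 1) (by omega) (by omega)).1 hwx with hfwd | hrev
  · refine (hxinj.eq_of_range_subset hr.ge (Fin.last _) fun i hi => hfwd i ?_).symm
    exact Fin.val_lt_last hi
  · have hxw : x = w ∘ Fin.rev := by
      refine hxinj.eq_of_range_subset ?_ 0 fun i hi => ?_
      · rw [← hr, range_comp, Fin.rev_surjective.range_eq, image_univ]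
      · have hlt : ((Fin.rev i : Fin (m + 2)) : ℕ) < m + 1 := by
          have : (i : ℕ) ≠ 0 := Fin.val_ne_iff.mpr hi
          simp only [Fin.val_rev]
          omega
        simpa using hrev (Fin.rev i) hlt
    exact absurd (hxw ▸ hx) (hU.2 hd w hw)

end PropertyU

theorem stmt7_general {S : Type*} {d : ℕ}
    (A : Set (Fin d → S)) (hinj : ∀ w ∈ A, Function.Injective w)
    (hU : PropertyU A) :
    ∀ w ∈ A, ∀ x ∈ A, Set.range w = Set.range x → w = x := by
  intro w hw x hx hr
  rcases lt_or_ge d 2 with hd | hd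
  · have : Subsingleton (Fin d) := Fin.subsingleton_iff_le_one.mpr (by omega)
    funext i
    exact ((hinj x hx).apply_eq_of_range_subset hr.ge
      fun j hj => (hj (Subsingleton.elim j i)).elim).symm
  · exact hU.eq_of_range_eq_of_two_le hd hw hx (hinj x hx) hr

/-- in a family of injective `d`-sequences with Property U,
no two distinct sequences have the same underlying set of elements. -/
theorem stmt7 {S : Type*} {d n : ℕ} [Fintype S] (hS : Fintype.card S = n)
    (A : Set (Fin d → S)) (hinj : ∀ w ∈ A, Function.Injective w)
    (hU : PropertyU A) :
    ∀ w ∈ A, ∀ x ∈ A, Set.range w = Set.range x → w = x :=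
  stmt7_general A hinj hU
end

section
/- Let A(3,n) be a set of injective 3-sequences over an n-set with Property U. Then |A(3,n)| ≤ max over 0 ≤ m ≤ n of (n−m)·m·(m−1)/2; consequently |A(3,n)| ≤ (2n/3)^2·(n/3)/2 + O(n^2). -/
open scoped Classical

/-!
The middle symbols of the sequences and their end symbols form disjoint sets `M` and `E`: an
end symbol of one sequence is an end-segment of length one, so by Property U it can only occur
at an end of any other (injective) sequence. A sequence is determined by its middle symbol and
the unordered pair of its ends, because it and its reversal are not both in the family. Hence
`|A| ≤ |M| · C(|E|, 2) ≤ (n - |E|) · |E| (|E| - 1) / 2`.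
-/

open Finset Function

namespace PropertyU

variable {S : Type*} {d : ℕ} {A : Set (Fin (d + 2) → S)} {w x : Fin (d + 2) → S}

theorem eq_zero_or_eq_last_of_apply_eq_apply_zero (hU : PropertyU A) (hw : w ∈ A) (hx : x ∈ A)
    (hx_inj : Injective x) {k : Fin (d + 2)} (hk : x k = w 0) :
    k = 0 ∨ k = Fin.last (d + 1) := by
  have hfirst := (hU.1 w hw x hx 1 le_rfl (by omega)).1 fun i hi =>
    ⟨k, by rw [hk, show i = 0 from Fin.ext (by simpa using hi)]⟩
  rcases hfirst with h | h
  · exact .inl (hx_inj (hk.trans (h 0 (by simp)).symm))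
  · exact .inr (hx_inj (hk.trans ((Fin.rev_zero (d + 1) ▸ h 0 (by simp)).symm)))

theorem eq_last_or_eq_zero_of_apply_eq_apply_last (hU : PropertyU A) (hw : w ∈ A) (hx : x ∈ A)
    (hx_inj : Injective x) {k : Fin (d + 2)} (hk : x k = w (Fin.last (d + 1))) :
    k = Fin.last (d + 1) ∨ k = 0 := by
  have hlast := (hU.1 w hw x hx 1 le_rfl (by omega)).2 fun i hi =>
    ⟨k, by rw [hk, show i = Fin.last (d + 1) from Fin.ext (by simp; omega)]⟩
  rcases hlast with h | h
  · exact .inl (hx_inj (hk.trans (h _ (by simp)).symm))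
  · exact .inr (hx_inj (hk.trans ((Fin.rev_last (d + 1) ▸ h _ (by simp)).symm)))

end PropertyU

section Triples

variable {S : Type*} [DecidableEq S]

def tripleMiddles (A : Finset (Fin 3 → S)) : Finset S := A.image (· 1)

def tripleEnds (A : Finset (Fin 3 → S)) : Finset S := A.image (· 0) ∪ A.image (· 2)

theorem disjoint_tripleMiddles_tripleEnds {A : Finset (Fin 3 → S)}
    (hinj : ∀ w ∈ A, Injective w) (hU : PropertyU (A : Set (Fin 3 → S))) :
    Disjoint (tripleMiddles A) (tripleEnds A) := by
  simp only [tripleMiddles, tripleEnds, disjoint_left, mem_image, mem_union]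
  rintro _ ⟨x, hx, rfl⟩ (⟨w, hw, hwx⟩ | ⟨w, hw, hwx⟩)
  · have := hU.eq_zero_or_eq_last_of_apply_eq_apply_zero hw hx (hinj x hx) hwx.symm
    exact absurd this (by decide)
  · have := hU.eq_last_or_eq_zero_of_apply_eq_apply_last hw hx (hinj x hx) hwx.symm
    exact absurd this (by decide)

theorem card_le_card_tripleMiddles_mul_choose_card_tripleEnds {A : Finset (Fin 3 → S)}
    (hends : ∀ w ∈ A, w 0 ≠ w 2) (hrev : ∀ w ∈ A, w ∘ Fin.rev ∉ A) :
    #A ≤ #(tripleMiddles A) * (#(tripleEnds A)).choose 2 := by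
  rw [← Sym2.card_image_offDiag, ← card_product]
  refine card_le_card_of_injOn (fun w => (w 1, s(w 0, w 2))) (fun w hw => ?_) ?_
  · simp only [coe_product, Set.mem_prod, mem_coe, tripleMiddles, tripleEnds, mem_image]
    refine ⟨⟨w, hw, rfl⟩, (w 0, w 2), ?_, rfl⟩
    simp only [mem_offDiag, mem_union, mem_image]
    exact ⟨.inl ⟨w, hw, rfl⟩, .inr ⟨w, hw, rfl⟩, hends w hw⟩
  · intro w hw x hx hwx
    simp only [Prod.mk.injEq, Sym2.eq_iff] at hwx
    obtain ⟨h1, ⟨h0, h2⟩ | ⟨h0, h2⟩⟩ := hwx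
    · funext i
      fin_cases i
      exacts [h0, h1, h2]
    · have hx_rev : w ∘ Fin.rev = x := by
        funext i
        fin_cases i
        exacts [h2, h1, h0]
      exact absurd (hx_rev ▸ hx) (hrev w hw)

end Triples

theorem mul_choose_two_le_sup {n k : ℕ} (hk : k ≤ n) :
    (n - k) * k.choose 2 ≤ (range (n + 1)).sup fun m => (n - m) * m * (m - 1) / 2 := by
  rw [Nat.choose_two_right, ← Nat.mul_div_assoc _ (Nat.even_mul_pred_self k).two_dvd,
    ← mul_assoc]
  exact le_sup (f := fun m => (n - m) * m * (m - 1) / 2) (mem_range.2 (Nat.lt_succ_of_le hk))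

/-- a family of injective 3-sequences over an `n`-set with Property U
has size at most `max_{0 ≤ m ≤ n} (n−m)·m·(m−1)/2`. -/
theorem stmt8 (n : ℕ) (A : Finset (Fin 3 → Fin n))
    (hinj : ∀ w ∈ A, Function.Injective w)
    (hU : PropertyU (A : Set (Fin 3 → Fin n))) :
    A.card ≤ (Finset.range (n + 1)).sup (fun m => (n - m) * m * (m - 1) / 2) := by
  have hcard : #(tripleMiddles A) + #(tripleEnds A) ≤ n := by
    simpa [← card_union_of_disjoint (disjoint_tripleMiddles_tripleEnds hinj hU)]
      using card_le_univ (tripleMiddles A ∪ tripleEnds A)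
  calc #A ≤ #(tripleMiddles A) * (#(tripleEnds A)).choose 2 :=
        card_le_card_tripleMiddles_mul_choose_card_tripleEnds
          (fun w hw => (hinj w hw).ne (by decide)) (hU.2 (by norm_num))
    _ ≤ (n - #(tripleEnds A)) * (#(tripleEnds A)).choose 2 := Nat.mul_le_mul_right _ (by omega)
    _ ≤ _ := mul_choose_two_le_sup (by omega)
end

section
/- Let R(3,n) be a family of 3-bisequences over an n-set with Property V, and suppose {bxy; ∅} and {bxz; ∅} are both in R(3,n) (where b, x, y, z are distinct elements). Then {byz; ∅} is not in R(3,n). -/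
/-- Property V for a family of bisequences, each represented as a pair of lists:
(1) any nonempty initial segment (a prefix of either of `w`'s two sequences) whose
elements all appear among the elements of `x` must be a prefix of one of `x`'s
sequences (with the same order);
(2) a bisequence and its reversal (swapping the two sequences) are not both in the family. -/
def PropertyV {S : Type*} (R : Set (List S × List S)) : Prop :=
  (∀ w ∈ R, ∀ x ∈ R, ∀ L : List S, L ≠ [] → (L <+: w.1 ∨ L <+: w.2) →
    (∀ a ∈ L, a ∈ x.1 ++ x.2) → (L <+: x.1 ∨ L <+: x.2)) ∧
  (∀ w ∈ R, (w.2, w.1) ∉ R)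

theorem stmt9_general {S : Type*}
    (R : Set (List S × List S))
    (hV : PropertyV R)
    (b x y z : S)
    (hxy : x ≠ y)
    (h1 : ([b, x, y], ([] : List S)) ∈ R) :
    ([b, y, z], ([] : List S)) ∉ R := by
  intro h3
  -- The initial segment `[b, y]` of `byz` lies inside `bxy` without being a prefix of it.
  have hby : [b, y] <+: [b, x, y] ∨ [b, y] <+: [] :=
    hV.1 _ h3 _ h1 [b, y] (List.cons_ne_nil _ _) (Or.inl ⟨[z], rfl⟩) (by simp)
  simp [hxy.symm] at hby

/-- in a family of 3-bisequences with Property V, if `{bxy;∅}` and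
`{bxz;∅}` are both in the family, then `{byz;∅}` is not. -/
theorem stmt9 {S : Type*} {n : ℕ} [Fintype S] (hS : Fintype.card S = n)
    (R : Set (List S × List S))
    (hwf : ∀ w ∈ R, (w.1 ++ w.2).length = 3 ∧ (w.1 ++ w.2).Nodup)
    (hV : PropertyV R)
    (b x y z : S) (hbx : b ≠ x) (hby : b ≠ y) (hbz : b ≠ z)
    (hxy : x ≠ y) (hxz : x ≠ z) (hyz : y ≠ z)
    (h1 : ([b, x, y], ([] : List S)) ∈ R)
    (h2 : ([b, x, z], ([] : List S)) ∈ R) :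
    ([b, y, z], ([] : List S)) ∉ R :=
  stmt9_general R hV b x y z hxy h1
end

section
/- Let R(3,n) be a family of 3-bisequences over an n-set with Property V, and suppose {bx; c} and {bx; d} are both in R(3,n) (b, c, d, x distinct). Then {dx; c} is not in R(3,n). -/
theorem PropertyV.fst_isPrefix {S : Type*} {R : Set (List S × List S)} (hV : PropertyV R)
    {w y : List S × List S} (hw : w ∈ R) (hy : y ∈ R) (hne : w.1 ≠ [])
    (hsub : ∀ a ∈ w.1, a ∈ y.1 ++ y.2) : w.1 <+: y.1 ∨ w.1 <+: y.2 :=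
  hV.1 w hw y hy w.1 hne (Or.inl (List.prefix_refl _)) hsub

theorem stmt10_general {S : Type*}
    (R : Set (List S × List S))
    (hV : PropertyV R)
    (b c d x : S) (hbd : b ≠ d)
    (h2 : ([b, x], [d]) ∈ R) :
    ([d, x], [c]) ∉ R := by
  intro h3
  rcases hV.fst_isPrefix h3 h2 (List.cons_ne_nil _ _) (by simp) with h | h
  · exact hbd (List.cons_prefix_cons.mp h).1.symm
  · simpa using h.length_le

/-- in a family of 3-bisequences with Property V, if `{bx;c}` and
`{bx;d}` are both in the family, then `{dx;c}` is not. -/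
theorem stmt10 {S : Type*} {n : ℕ} [Fintype S] (hS : Fintype.card S = n)
    (R : Set (List S × List S))
    (hwf : ∀ w ∈ R, (w.1 ++ w.2).length = 3 ∧ (w.1 ++ w.2).Nodup)
    (hV : PropertyV R)
    (b c d x : S) (hbc : b ≠ c) (hbd : b ≠ d) (hbx : b ≠ x)
    (hcd : c ≠ d) (hcx : c ≠ x) (hdx : d ≠ x)
    (h1 : ([b, x], [c]) ∈ R) (h2 : ([b, x], [d]) ∈ R) :
    ([d, x], [c]) ∉ R :=
  stmt10_general R hV b c d x hbd h2
end

section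
/- Fix a vertex b and a triangle-free condition: let R(3,n) be a family of 3-bisequences over an n-set with Property V, let A be the set of elements appearing as first element of some sequence in a bisequence of R(3,n), and W its complement, with |A| = a, |W| = w. For each e ∈ A, the graph G_e on vertex set W whose edges are pairs [x,y] such that {eyx; ∅} or {exy; ∅} or a reversal is in R(3,n), is triangle-free. -/
/-!
Call `u → v` an arc when `{e u v; ∅}` (or its reversal) lies in `R`. If `u → v` and `v → w`,
then `[e, v]` is an initial segment of `e v w` all of whose elements occur in `e u v`, so by
Property V it is an initial segment of `e u v`, forcing `u = v`. So no vertex is the head of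
one arc between distinct vertices and the tail of another. But every edge of `G_e` is such an
arc in some direction, and every orientation of a triangle has a vertex that is the head of
one arc and the tail of another.
-/

namespace SimpleGraph

variable {α : Type*} {D : α → α → Prop}

theorem cliqueFree_three_fromRel_of_eq_of_rel_of_rel (hD : ∀ u v w, D u v → D v w → u = v) :
    (fromRel D).CliqueFree 3 := by
  classical
  intro t ht
  obtain ⟨x, y, z, ⟨hxy, hxy'⟩, ⟨hxz, hxz'⟩, ⟨hyz, hyz'⟩, -⟩ := is3Clique_iff.mp ht
  rcases hxy' with h₁ | h₁ <;> rcases hxz' with h₂ | h₂ <;> rcases hyz' with h₃ | h₃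
  · exact hxy (hD _ _ _ h₁ h₃)
  · exact hxz (hD _ _ _ h₂ h₃)
  · exact hxy (hD _ _ _ h₁ h₃)
  · exact hxz (hD _ _ _ h₂ h₁).symm
  · exact hxy (hD _ _ _ h₁ h₂).symm
  · exact hxy (hD _ _ _ h₁ h₂).symm
  · exact hyz (hD _ _ _ h₃ h₂)
  · exact hyz (hD _ _ _ h₃ h₁).symm

end SimpleGraph

section

variable {S : Type*}

/-- The bisequence `{l; ∅}` or its reversal `{∅; l}` lies in `R`. -/
def OneSidedMem (R : Set (List S × List S)) (l : List S) : Prop :=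
  (l, []) ∈ R ∨ ([], l) ∈ R

namespace PropertyV

variable {R : Set (List S × List S)}

theorem prefix_of_oneSidedMem (hV : PropertyV R) {l m L : List S} (hl : OneSidedMem R l)
    (hm : OneSidedMem R m) (hL : L ≠ []) (hLl : L <+: l) (hLm : ∀ a ∈ L, a ∈ m) : L <+: m := by
  have hpre : ∀ w ∈ R, L <+: w.1 ∨ L <+: w.2 → L <+: m := fun w hw hLw => by
    rcases hm with hm | hm <;>
      simpa [List.prefix_nil, hL] using hV.1 w hw _ hm L hL hLw (by simpa using hLm)
  rcases hl with hl | hl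
  · exact hpre _ hl (Or.inl hLl)
  · exact hpre _ hl (Or.inr hLl)

theorem eq_of_oneSidedMem_of_oneSidedMem (hV : PropertyV R) {e u v w : S}
    (huv : OneSidedMem R [e, u, v]) (hvw : OneSidedMem R [e, v, w]) : u = v := by
  have h : [e, v] <+: [e, u, v] :=
    hV.prefix_of_oneSidedMem hvw huv (List.cons_ne_nil _ _) ⟨[w], rfl⟩ (by simp)
  simpa [eq_comm] using h

end PropertyV

end

theorem stmt11_general {S : Type*}
    (R : Set (List S × List S))
    (hV : PropertyV R)
    (A : Set S)
    (e : S) :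
    (SimpleGraph.fromRel (fun x y : S =>
      x ∉ A ∧ y ∉ A ∧
        ((([e, y, x], ([] : List S)) ∈ R ∨ (([] : List S), [e, y, x]) ∈ R) ∨
         (([e, x, y], ([] : List S)) ∈ R ∨ (([] : List S), [e, x, y]) ∈ R)))).CliqueFree 3 := by
  refine (SimpleGraph.cliqueFree_three_fromRel_of_eq_of_rel_of_rel
    (D := fun u v => OneSidedMem R [e, u, v])
    fun _ _ _ => hV.eq_of_oneSidedMem_of_oneSidedMem).anti ?_
  rintro x y ⟨hne, h⟩
  exact ⟨hne, by unfold OneSidedMem; tauto⟩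

/-- let `A` be the set of elements appearing as the first element of some
sequence of a bisequence in a family `R` of 3-bisequences with Property V, and `W = Aᶜ`.
For each `e ∈ A`, the graph `G_e` on `W` whose edges are the pairs `[x,y]` with
`{eyx;∅}` or `{exy;∅}` or one of their reversals in `R` is triangle-free. -/
theorem stmt11 {S : Type*} {n : ℕ} [Fintype S] (hS : Fintype.card S = n)
    (R : Set (List S × List S))
    (hwf : ∀ w ∈ R, (w.1 ++ w.2).length = 3 ∧ (w.1 ++ w.2).Nodup)
    (hV : PropertyV R)
    (A : Set S) (hA : A = {s | ∃ w ∈ R, w.1.head? = some s ∨ w.2.head? = some s})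
    (e : S) (he : e ∈ A) :
    (SimpleGraph.fromRel (fun x y : S =>
      x ∉ A ∧ y ∉ A ∧
        ((([e, y, x], ([] : List S)) ∈ R ∨ (([] : List S), [e, y, x]) ∈ R) ∨
         (([e, x, y], ([] : List S)) ∈ R ∨ (([] : List S), [e, x, y]) ∈ R)))).CliqueFree 3 :=
  stmt11_general R hV A e
end

section
/- Let R(3,n) be a family of 3-bisequences over an n-set with Property V. Then |R(3,n)| ≤ n^3/16. -/
open Finset

section Counting

variable {α β : Type*}

lemma four_mul_card_le_sq_of_disjoint [DecidableEq β] {F : Finset (β × β)} {S : Finset β}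
    (hdisj : Disjoint (F.image Prod.fst) (F.image Prod.snd))
    (hS : ∀ z ∈ F, z.1 ∈ S ∧ z.2 ∈ S) : 4 * #F ≤ #S ^ 2 := by
  have hsum : #(F.image Prod.fst) + #(F.image Prod.snd) ≤ #S := by
    rw [← card_union_of_disjoint hdisj]
    exact card_le_card (union_subset (by grind) (by grind))
  calc 4 * #F ≤ 4 * (#(F.image Prod.fst) * #(F.image Prod.snd)) := by
        rw [← card_product]; gcongr; exact subset_product
    _ ≤ (#(F.image Prod.fst) + #(F.image Prod.snd)) ^ 2 := by
        rw [← mul_assoc]; exact four_mul_le_sq_add _ _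
    _ ≤ #S ^ 2 := by gcongr

lemma card_eq_sum_card_image_snd_filter [Fintype α] [DecidableEq α] [DecidableEq β]
    (T : Finset (α × β)) : #T = ∑ a, #((T.filter (·.1 = a)).image Prod.snd) := by
  rw [card_eq_sum_card_fiberwise (f := Prod.fst) (t := univ) fun _ _ ↦ mem_univ _]
  refine sum_congr rfl fun a _ ↦ (card_image_of_injOn ?_).symm
  intro z hz z' hz' h
  exact Prod.ext ((mem_filter.1 hz).2.trans (mem_filter.1 hz').2.symm) h

theorem sixteen_mul_card_le_card_pow_three [Fintype α] [DecidableEq α]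
    (T : Finset (α × α × α)) (A : Finset α)
    (hA : ∀ z ∈ T, (z.2.1 ∈ A ↔ z.1 ∉ A) ∧ (z.2.2 ∈ A ↔ z.1 ∉ A))
    (hT : ∀ p u y y', (p, u, y) ∈ T → (p, y', u) ∉ T) :
    16 * #T ≤ Fintype.card α ^ 3 := by
  have hfiber : ∀ e, 4 * #((T.filter (·.1 = e)).image Prod.snd) ≤
      #(if e ∈ A then Aᶜ else A) ^ 2 := by
    intro e
    apply four_mul_card_le_sq_of_disjoint
    · simp only [disjoint_left, mem_image, mem_filter, Prod.exists, Prod.mk.injEq]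
      rintro u ⟨_, y, ⟨_, _, _, ⟨hz, rfl⟩, rfl, rfl⟩, rfl⟩
        ⟨y', _, ⟨_, _, _, ⟨hz', rfl⟩, rfl, rfl⟩, rfl⟩
      exact hT _ _ _ _ hz hz'
    · simp only [mem_image, mem_filter]
      rintro _ ⟨⟨p, q, r⟩, ⟨hz, rfl⟩, rfl⟩
      have := hA _ hz
      split_ifs <;> simp_all
  have hsplit : ∑ e, #(if e ∈ A then Aᶜ else A) ^ 2 = #A * #Aᶜ ^ 2 + #Aᶜ * #A ^ 2 := by
    simp [apply_ite (fun s : Finset α ↦ #s ^ 2), sum_ite, filter_notMem_eq_sdiff,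
      compl_eq_univ_sdiff]
  calc 16 * #T = 4 * ∑ e, 4 * #((T.filter (·.1 = e)).image Prod.snd) := by
        rw [← mul_sum, card_eq_sum_card_image_snd_filter]; ring
    _ ≤ 4 * (#A * #Aᶜ ^ 2 + #Aᶜ * #A ^ 2) := by
        rw [← hsplit]; gcongr with e; exact hfiber e
    _ = 4 * #A * #Aᶜ * (#A + #Aᶜ) := by ring
    _ ≤ (#A + #Aᶜ) ^ 2 * (#A + #Aᶜ) := by gcongr; exact four_mul_le_sq_add _ _
    _ = Fintype.card α ^ 3 := by rw [card_add_card_compl]; ring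

end Counting

section Bisequences

variable {α : Type*}

def IsHead (R : Set (List α × List α)) (e : α) : Prop :=
  ∃ w ∈ R, [e] <+: w.1 ∨ [e] <+: w.2

lemma PropertyV.isHead_iff {R : Set (List α × List α)} (hV : PropertyV R) {x : List α × List α}
    (hx : x ∈ R) {e : α} (he : e ∈ x.1 ++ x.2) : IsHead R e ↔ [e] <+: x.1 ∨ [e] <+: x.2 :=
  ⟨fun ⟨w, hw, hpre⟩ ↦ hV.1 w hw x hx [e] (List.cons_ne_nil _ _) hpre (by simpa using he),
    fun h ↦ ⟨x, hx, h⟩⟩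

/-- The first coordinate is the element whose head status differs from that of the other two. -/
def toTriple (d : α) : List α × List α → α × α × α
  | ([], [p, q, r]) | ([p, q, r], []) | ([q], [r, p]) | ([r, p], [q]) => (p, q, r)
  | _ => (d, d, d)

lemma eq_of_toTriple_eq {d p q r : α} {w : List α × List α} (hw : (w.1 ++ w.2).length = 3)
    (h : toTriple d w = (p, q, r)) :
    w = ([], [p, q, r]) ∨ w = ([p, q, r], []) ∨ w = ([q], [r, p]) ∨ w = ([r, p], [q]) := by
  obtain ⟨l₁, l₂⟩ := w
  rcases l₁ with _ | ⟨a, _ | ⟨b, _ | ⟨c, _ | l⟩⟩⟩ <;>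
    rcases l₂ with _ | ⟨a', _ | ⟨b', _ | ⟨c', _ | l'⟩⟩⟩ <;>
    simp_all [toTriple]

variable {R : Set (List α × List α)}

lemma PropertyV.shape_of_toTriple_eq (hV : PropertyV R)
    (hwf : ∀ w ∈ R, (w.1 ++ w.2).length = 3 ∧ (w.1 ++ w.2).Nodup) {d : α}
    {w : List α × List α} (hw : w ∈ R) {p q r : α} (h : toTriple d w = (p, q, r)) :
    ((w = ([], [p, q, r]) ∨ w = ([p, q, r], [])) ∧ IsHead R p ∧ ¬IsHead R q ∧ ¬IsHead R r) ∨
    ((w = ([q], [r, p]) ∨ w = ([r, p], [q])) ∧ ¬IsHead R p ∧ IsHead R q ∧ IsHead R r) := by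
  have hnd := (hwf w hw).2
  have hp := hV.isHead_iff hw (e := p)
  have hq := hV.isHead_iff hw (e := q)
  have hr := hV.isHead_iff hw (e := r)
  rcases eq_of_toTriple_eq (hwf w hw).1 h with rfl | rfl | rfl | rfl <;> simp_all <;> grind

lemma PropertyV.injOn_toTriple (hV : PropertyV R)
    (hwf : ∀ w ∈ R, (w.1 ++ w.2).length = 3 ∧ (w.1 ++ w.2).Nodup) (d : α) :
    Set.InjOn (toTriple d) R := by
  intro w hw x hx hwx
  rcases hz : toTriple d w with ⟨p, q, r⟩
  have hsw := hV.2 w hw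
  have hsx := hV.2 x hx
  rcases hV.shape_of_toTriple_eq hwf hw hz with ⟨rfl | rfl, -, hq, -⟩ | ⟨rfl | rfl, -, hq, -⟩ <;>
    rcases hV.shape_of_toTriple_eq hwf hx (hwx ▸ hz) with
      ⟨rfl | rfl, -, hq', -⟩ | ⟨rfl | rfl, -, hq', -⟩ <;>
    simp_all

lemma PropertyV.toTriple_ne_of_toTriple_eq (hV : PropertyV R)
    (hwf : ∀ w ∈ R, (w.1 ++ w.2).length = 3 ∧ (w.1 ++ w.2).Nodup) {d e u y y' : α}
    {w x : List α × List α} (hw : w ∈ R) (hx : x ∈ R) (hzw : toTriple d w = (e, u, y)) :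
    toTriple d x ≠ (e, y', u) := by
  intro hzx
  have hndw := (hwf w hw).2
  have hndx := (hwf x hx).2
  rcases hV.shape_of_toTriple_eq hwf hw hzw with ⟨hw', he, -⟩ | ⟨hw', he, -⟩ <;>
    rcases hV.shape_of_toTriple_eq hwf hx hzx with ⟨hx', he', -⟩ | ⟨hx', he', -⟩
  · have := hV.1 w hw x hx [e, u] (by simp) (by rcases hw' with rfl | rfl <;> simp)
      (by rcases hx' with rfl | rfl <;> simp)
    rcases hx' with rfl | rfl <;> simp_all
  · exact he' he
  · exact he he'
  · have := hV.1 x hx w hw [u, e] (by simp) (by rcases hx' with rfl | rfl <;> simp)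
      (by rcases hw' with rfl | rfl <;> simp)
    rcases hw' with rfl | rfl <;> simp_all

end Bisequences

/-- a family of 3-bisequences over an `n`-set with Property V has
size at most `n³/16`. -/
theorem stmt13 (n : ℕ) (R : Finset (List (Fin n) × List (Fin n)))
    (hwf : ∀ w ∈ R, (w.1 ++ w.2).length = 3 ∧ (w.1 ++ w.2).Nodup)
    (hV : PropertyV (R : Set (List (Fin n) × List (Fin n)))) :
    16 * R.card ≤ n ^ 3 := by
  classical
  rcases R.eq_empty_or_nonempty with rfl | ⟨w₀, hw₀⟩
  · simp
  obtain ⟨d, -⟩ := List.exists_mem_of_length_pos (l := w₀.1 ++ w₀.2) (by simp [(hwf w₀ hw₀).1])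
  calc 16 * #R = 16 * #(R.image (toTriple d)) := by
        rw [card_image_of_injOn (hV.injOn_toTriple hwf d)]
    _ ≤ Fintype.card (Fin n) ^ 3 := by
        refine sixteen_mul_card_le_card_pow_three _ (univ.filter (IsHead ↑R)) ?_ ?_
        · simp only [mem_image, mem_filter, mem_univ, true_and]
          rintro _ ⟨w, hw, rfl⟩
          rcases hV.shape_of_toTriple_eq hwf hw rfl with ⟨-, h⟩ | ⟨-, h⟩ <;> tauto
        · simp only [mem_image, not_exists, not_and]
          rintro p u y y' ⟨w, hw, hzw⟩ x hx
          exact hV.toTriple_ne_of_toTriple_eq hwf hw hx hzw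
    _ = n ^ 3 := by rw [Fintype.card_fin]
end

section
/- For every configuration H ⊆ V(Q_d) and every positive integer d, π(H,d) ≥ d!/d^d. -/
/-!
Lower bound: split the coordinates of `Q_{dm}` into `d` blocks of size `m` and let `S` be the
set of vertices whose pattern of block parities lies in `H`. On a sub-`d`-cube with one varying
coordinate in each block, the parity pattern is an automorphism of `Q_d`, so `S` induces an exact
copy of `H` there. These sub-cubes form a fraction `m ^ d / C(dm, d) ≥ d! / d ^ d` of all
sub-`d`-cubes.

Convergence: a good sub-`d`-cube of `Q_{n+1}` avoiding direction `j` is a good sub-cube of one of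
the two facets `x_j = b`, and each good sub-cube avoids `n + 1 - d` directions; this double count
shows that the density is nonincreasing in `n ≥ d`.
-/

open scoped Classical

/-- The automorphism of the `d`-cube `Q_d` (vertices: `Fin d → Bool`) determined by a
coordinate permutation `π` and a translation (coordinate complementation pattern) `b`.
Every automorphism of `Q_d` is of this form. -/
def cubeAuto {d : ℕ} (π : Equiv.Perm (Fin d)) (b : Fin d → Bool) (v : Fin d → Bool) :
    Fin d → Bool :=
  fun i => xor (v (π.symm i)) (b i)

/-- `K` is an exact copy of `H` in `Q_d`: some automorphism of `Q_d` maps `H` onto `K`. -/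
def ExactCopy {d : ℕ} (H K : Set (Fin d → Bool)) : Prop :=
  ∃ (π : Equiv.Perm (Fin d)) (b : Fin d → Bool), K = cubeAuto π b '' H

/-- The configuration in `Q_d` induced on the sub-`d`-cube of `Q_n` with varying
coordinate set `D` (with `D.card = d`) and fixed values `f` outside `D`, by a set
`S ⊆ V(Q_n)`: the varying coordinates are identified with `Fin d` in increasing order. -/
def subcubeConfig {n d : ℕ} (D : Finset (Fin n)) (hD : D.card = d)
    (f : Fin n → Bool) (S : Set (Fin n → Bool)) : Set (Fin d → Bool) :=
  {x | (fun i => if h : i ∈ D then x ((D.orderIsoOfFin hD).symm ⟨i, h⟩) else f i) ∈ S}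

/-- `G(H,d,n,S)`: the number of sub-`d`-cubes `R` of `Q_n` such that `S ∩ R` is an exact
copy of `H`.  A sub-`d`-cube is encoded as a pair `(D, f)` with `D.card = d` and `f`
normalized to be `false` on `D`; there are `C(n,d)·2^(n-d)` of them. -/
noncomputable def goodCount {d : ℕ} (H : Set (Fin d → Bool)) (n : ℕ)
    (S : Set (Fin n → Bool)) : ℕ :=
  ((Finset.univ : Finset (Finset (Fin n) × (Fin n → Bool))).filter
    (fun P => ∃ h : P.1.card = d,
      (∀ i ∈ P.1, P.2 i = false) ∧ ExactCopy H (subcubeConfig P.1 h P.2 S))).card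

/-- `ex(H,d,n)`: the maximum over `S ⊆ V(Q_n)` of the fraction of sub-`d`-cubes of `Q_n`
whose intersection with `S` is an exact copy of `H`. -/
noncomputable def exDensity {d : ℕ} (H : Set (Fin d → Bool)) (n : ℕ) : ℝ :=
  (((Finset.univ : Finset (Finset (Fin n → Bool))).sup
      (fun S => goodCount H n (S : Set (Fin n → Bool))) : ℕ) : ℝ) /
    ((n.choose d : ℝ) * 2 ^ (n - d))


open Finset Function

lemma Finset.orderIsoOfFin_symm_map {α β : Type*} [LinearOrder α] [LinearOrder β]
    (g : α ↪o β) {s : Finset α} {k : ℕ} (hs : s.card = k)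
    (hs' : (s.map g.toEmbedding).card = k) {a : α} (ha : a ∈ s) :
    ((s.map g.toEmbedding).orderIsoOfFin hs').symm ⟨g a, mem_map_of_mem _ ha⟩ =
      (s.orderIsoOfFin hs).symm ⟨a, ha⟩ := by
  have hmap : (s.map g.toEmbedding).orderEmbOfFin hs' = (s.orderEmbOfFin hs).trans g :=
    (orderEmbOfFin_unique' hs' fun r => mem_map_of_mem _ (orderEmbOfFin_mem s hs r)).symm
  rw [OrderIso.symm_apply_eq, Subtype.ext_iff, coe_orderIsoOfFin_apply, hmap,
    RelEmbedding.trans_apply, ← coe_orderIsoOfFin_apply, OrderIso.apply_symm_apply]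

lemma card_filter_forall_eq_false {ι : Type*} [Fintype ι] [DecidableEq ι] (D : Finset ι) :
    #{f : ι → Bool | ∀ i ∈ D, f i = false} = 2 ^ (Fintype.card ι - #D) := by
  have : ({f : ι → Bool | ∀ i ∈ D, f i = false} : Finset _) =
      Fintype.piFinset fun i => if i ∈ D then {false} else univ := by
    ext f
    simp only [mem_filter, mem_univ, true_and, Fintype.mem_piFinset]
    refine forall_congr' fun i => ?_
    split_ifs with hi <;> simp [hi]
  rw [this, Fintype.card_piFinset]
  simp [apply_ite card, prod_ite, filter_notMem_eq_sdiff, card_univ_sdiff]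

section CubeAutomorphism
variable {d : ℕ}

lemma cubeAuto_symm_cubeAuto (π : Equiv.Perm (Fin d)) (b v : Fin d → Bool) :
    cubeAuto π.symm (b ∘ π) (cubeAuto π b v) = v := by
  funext i
  simp [cubeAuto]

lemma cubeAuto_cubeAuto_symm (π : Equiv.Perm (Fin d)) (b v : Fin d → Bool) :
    cubeAuto π b (cubeAuto π.symm (b ∘ π) v) = v := by
  funext i
  simp [cubeAuto]

lemma exactCopy_preimage_cubeAuto (H : Set (Fin d → Bool)) (π : Equiv.Perm (Fin d))
    (b : Fin d → Bool) : ExactCopy H (cubeAuto π b ⁻¹' H) :=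
  ⟨π.symm, b ∘ π, (congrFun (Set.image_eq_preimage_of_inverse (cubeAuto_cubeAuto_symm π b)
    (cubeAuto_symm_cubeAuto π b)) H).symm⟩

end CubeAutomorphism

section BlockParity
variable {n d : ℕ}

def blockParity (p : Fin n → Fin d) (v : Fin n → Bool) (i : Fin d) : Bool :=
  decide (∑ k with p k = i, ((v k).toNat : ZMod 2) = 1)

lemma blockParity_eq_xor (p : Fin n → Fin d) (v : Fin n → Bool) {i : Fin d} {k₀ : Fin n}
    (hk₀ : p k₀ = i) :
    blockParity p v i =
      xor (v k₀)
        (decide (∑ k ∈ ({k | p k = i} : Finset _).erase k₀, ((v k).toNat : ZMod 2) = 1)) := by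
  have parity_add : ∀ (x : Bool) (z : ZMod 2),
      decide ((x.toNat : ZMod 2) + z = 1) = xor x (decide (z = 1)) := by decide
  rw [blockParity, ← add_sum_erase _ _ (mem_filter.2 ⟨mem_univ k₀, hk₀⟩), parity_add]

lemma Function.LeftInverse.mem_image_univ_iff {p : Fin n → Fin d} {s : Fin d → Fin n}
    (hs : LeftInverse p s) {k : Fin n} : k ∈ univ.image s ↔ s (p k) = k := by
  simp only [mem_image, mem_univ, true_and]
  exact ⟨fun ⟨i, hi⟩ => hi ▸ congrArg s (hs i), fun h => ⟨p k, h⟩⟩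

/-- The automorphism sends `i` to the rank of `s i` among the varying coordinates and then
adds the parity of the fixed coordinates of block `i`. -/
theorem exactCopy_subcubeConfig_blockParity (H : Set (Fin d → Bool)) {p : Fin n → Fin d}
    {s : Fin d → Fin n} (hs : LeftInverse p s) (hD : (univ.image s).card = d)
    (f : Fin n → Bool) :
    ExactCopy H (subcubeConfig (univ.image s) hD f (blockParity p ⁻¹' H)) := by
  set D := univ.image s
  have hsD : ∀ i, s i ∈ D := fun i => mem_image_of_mem s (mem_univ i)
  set ρ : Fin d → Fin d := fun i => (D.orderIsoOfFin hD).symm ⟨s i, hsD i⟩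
  have hρ : Injective ρ := fun i i' h =>
    hs.injective (congrArg Subtype.val ((D.orderIsoOfFin hD).symm.injective h))
  set π := (Equiv.ofBijective ρ (Finite.injective_iff_bijective.1 hρ)).symm
  set c : Fin d → Bool := fun i =>
    decide (∑ k ∈ ({k | p k = i} : Finset _).erase (s i), ((f k).toNat : ZMod 2) = 1)
  suffices subcubeConfig D hD f (blockParity p ⁻¹' H) = cubeAuto π c ⁻¹' H from
    this ▸ exactCopy_preimage_cubeAuto H π c
  ext x
  refine iff_of_eq (congrArg (· ∈ H) (funext fun i => ?_))
  rw [blockParity_eq_xor _ _ (hs i), dif_pos (hsD i)]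
  simp only [cubeAuto, π, ρ, c, Equiv.symm_symm, Equiv.ofBijective_apply]
  refine congrArg (xor _) (congrArg (decide <| · = 1) (sum_congr rfl fun k hk => ?_))
  obtain ⟨hks, hk⟩ := mem_erase.1 hk
  have hkD : k ∉ D := fun h => hks ((mem_filter.1 hk).2 ▸ (hs.mem_image_univ_iff.1 h)).symm
  rw [dif_neg hkD]

end BlockParity

section Counting
variable {n d : ℕ}

noncomputable def goodSubcubes (H : Set (Fin d → Bool)) (n : ℕ) (S : Set (Fin n → Bool)) :
    Finset (Finset (Fin n) × (Fin n → Bool)) :=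
  {P | ∃ h : P.1.card = d,
    (∀ i ∈ P.1, P.2 i = false) ∧ ExactCopy H (subcubeConfig P.1 h P.2 S)}

lemma mem_goodSubcubes {H : Set (Fin d → Bool)} {S : Set (Fin n → Bool)}
    {P : Finset (Fin n) × (Fin n → Bool)} :
    P ∈ goodSubcubes H n S ↔
      ∃ h : P.1.card = d,
        (∀ i ∈ P.1, P.2 i = false) ∧ ExactCopy H (subcubeConfig P.1 h P.2 S) := by
  simp [goodSubcubes]

lemma goodCount_eq_card (H : Set (Fin d → Bool)) (S : Set (Fin n → Bool)) :
    goodCount H n S = #(goodSubcubes H n S) := rfl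

lemma card_mul_le_goodCount {H : Set (Fin d → Bool)} {S : Set (Fin n → Bool)}
    (𝒟 : Finset (Finset (Fin n)))
    (h𝒟 : ∀ D ∈ 𝒟, ∃ hD : D.card = d, ∀ f, ExactCopy H (subcubeConfig D hD f S)) :
    #𝒟 * 2 ^ (n - d) ≤ goodCount H n S := by
  set T := (𝒟 ×ˢ univ).filter fun P : Finset (Fin n) × (Fin n → Bool) =>
    ∀ i ∈ P.1, P.2 i = false
  have hT : #T = #𝒟 * 2 ^ (n - d) := by
    rw [card_filter, sum_product, ← smul_eq_mul, ← sum_const]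
    refine sum_congr rfl fun D hD => ?_
    rw [← card_filter, ← (h𝒟 D hD).1]
    convert card_filter_forall_eq_false D
    exact (Fintype.card_fin n).symm
  refine hT ▸ card_le_card fun P hP => ?_
  obtain ⟨hP𝒟, hfalse⟩ := mem_filter.1 hP
  obtain ⟨hD, hcopy⟩ := h𝒟 P.1 (mem_product.1 hP𝒟).1
  exact mem_filter.2 ⟨mem_univ P, hD, hfalse, hcopy P.2⟩

lemma pow_mul_le_goodCount_blockParity (H : Set (Fin d → Bool)) (m : ℕ) :
    m ^ d * 2 ^ (d * m - d) ≤
      goodCount H (d * m) (blockParity (fun k => (finProdFinEquiv.symm k).1) ⁻¹' H) := by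
  set p : Fin (d * m) → Fin d := fun k => (finProdFinEquiv.symm k).1
  set s : (Fin d → Fin m) → Fin d → Fin (d * m) := fun t i => finProdFinEquiv (i, t i)
  have hs : ∀ t, LeftInverse p (s t) := fun t i => by
    simp only [p, s, Equiv.symm_apply_apply]
  have hinj : Injective fun t => univ.image (s t) := fun t t' h => funext fun i => by
    have h : univ.image (s t) = univ.image (s t') := h
    have := (hs t').mem_image_univ_iff.1 (h ▸ mem_image_of_mem (s t) (mem_univ i))
    simp only [p, s, Equiv.symm_apply_apply] at this
    exact (congrArg Prod.snd (finProdFinEquiv.injective this)).symm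
  have := card_mul_le_goodCount (H := H) (S := blockParity p ⁻¹' H) (univ.image _) fun D hD => by
    obtain ⟨t, -, rfl⟩ := mem_image.1 hD
    have hcard : #(univ.image (s t)) = d := by
      rw [card_image_of_injective _ (hs t).injective, card_univ, Fintype.card_fin]
    exact ⟨hcard, exactCopy_subcubeConfig_blockParity H (hs t) hcard⟩
  rwa [card_image_of_injective _ hinj, card_univ, Fintype.card_fun, Fintype.card_fin,
    Fintype.card_fin] at this

end Counting

section Density
variable {n d : ℕ}

noncomputable def maxGoodCount (H : Set (Fin d → Bool)) (n : ℕ) : ℕ :=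
  (univ : Finset (Finset (Fin n → Bool))).sup fun S => goodCount H n (S : Set (Fin n → Bool))

lemma exDensity_eq (H : Set (Fin d → Bool)) (n : ℕ) :
    exDensity H n = maxGoodCount H n / ((n.choose d : ℝ) * 2 ^ (n - d)) := rfl

lemma goodCount_le_maxGoodCount (H : Set (Fin d → Bool)) (S : Set (Fin n → Bool)) :
    goodCount H n S ≤ maxGoodCount H n := by
  have := le_sup (f := fun S : Finset (Fin n → Bool) => goodCount H n S) (mem_univ S.toFinset)
  simp only [Set.coe_toFinset] at this
  exact this

lemma exists_goodCount_eq_maxGoodCount (H : Set (Fin d → Bool)) (n : ℕ) :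
    ∃ S : Set (Fin n → Bool), goodCount H n S = maxGoodCount H n := by
  obtain ⟨S, -, hS⟩ := exists_mem_eq_sup (univ : Finset (Finset (Fin n → Bool))) univ_nonempty
    fun S => goodCount H n (S : Set (Fin n → Bool))
  exact ⟨S, hS.symm⟩

lemma factorial_div_pow_le_exDensity_mul (H : Set (Fin d → Bool)) {m : ℕ} (hm : 0 < m) :
    (d.factorial : ℝ) / (d : ℝ) ^ d ≤ exDensity H (d * m) := by
  have hgood := (pow_mul_le_goodCount_blockParity H m).trans (goodCount_le_maxGoodCount H _)
  have hchoose : d.factorial * (d * m).choose d ≤ m ^ d * d ^ d := by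
    rw [← Nat.descFactorial_eq_factorial_mul_choose, ← mul_pow, mul_comm m]
    exact Nat.descFactorial_le_pow _ _
  have hpos : 0 < (d * m).choose d := Nat.choose_pos (Nat.le_mul_of_pos_right d hm)
  have hpow : (0 : ℝ) < (d : ℝ) ^ d := by exact_mod_cast Nat.pow_self_pos
  rw [exDensity_eq, div_le_div_iff₀ hpow (by positivity)]
  calc (d.factorial : ℝ) * ((d * m).choose d * 2 ^ (d * m - d))
      ≤ m ^ d * d ^ d * 2 ^ (d * m - d) := by
        rw [← mul_assoc]
        exact mul_le_mul_of_nonneg_right (by exact_mod_cast hchoose) (by positivity)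
    _ = (m ^ d * 2 ^ (d * m - d) : ℕ) * d ^ d := by push_cast; ring
    _ ≤ maxGoodCount H (d * m) * d ^ d := by gcongr

end Density

section Restriction
variable {n d : ℕ}

def sliceAt (j : Fin (n + 1)) (b : Bool) (S : Set (Fin (n + 1) → Bool)) : Set (Fin n → Bool) :=
  {w | j.insertNth b w ∈ S}

lemma subcubeConfig_map_succAbove (S : Set (Fin (n + 1) → Bool)) (j : Fin (n + 1))
    {D : Finset (Fin n)} (hD : D.card = d)
    (hD' : (D.map (Fin.succAboveOrderEmb j).toEmbedding).card = d) (b : Bool)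
    (f : Fin n → Bool) :
    subcubeConfig (D.map (Fin.succAboveOrderEmb j).toEmbedding) hD' (j.insertNth b f) S =
      subcubeConfig D hD f (sliceAt j b S) := by
  ext x
  refine iff_of_eq (congrArg (· ∈ S) (funext fun k => ?_))
  induction k using j.succAboveCases with
  | x =>
    have hj : j ∉ D.map (Fin.succAboveOrderEmb j).toEmbedding := fun h => by
      obtain ⟨a, -, ha⟩ := mem_map.1 h
      exact Fin.succAbove_ne j a ha
    simp only [dif_neg hj, Fin.insertNth_apply_same]
  | p a =>
    have hmem : j.succAbove a ∈ D.map (Fin.succAboveOrderEmb j).toEmbedding ↔ a ∈ D :=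
      mem_map' (Fin.succAboveOrderEmb j).toEmbedding
    simp only [Fin.insertNth_apply_succAbove]
    by_cases ha : a ∈ D
    · rw [dif_pos (hmem.2 ha), dif_pos ha]
      exact congrArg x (Finset.orderIsoOfFin_symm_map _ hD hD' ha)
    · rw [dif_neg (hmem.not.2 ha), dif_neg ha]

lemma card_filter_goodSubcubes_le (H : Set (Fin d → Bool)) (S : Set (Fin (n + 1) → Bool))
    (j : Fin (n + 1)) (b : Bool) :
    #{P ∈ goodSubcubes H (n + 1) S | j ∉ P.1 ∧ P.2 j = b} ≤
      goodCount H n (sliceAt j b S) := by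
  set e := (Fin.succAboveOrderEmb j).toEmbedding
  refine card_le_card_of_surjOn (fun P => (P.1.map e, j.insertNth b P.2)) ?_
  rintro ⟨D, f⟩ hP
  simp only [coe_filter, Set.mem_ofPred_eq, mem_goodSubcubes] at hP
  obtain ⟨⟨hD, hfalse, hcopy⟩, hj, rfl⟩ := hP
  have hDsub : D ⊆ univ.map e := fun k hk => mem_map.2 <|
    (Fin.exists_succAbove_eq fun h : k = j => hj (h ▸ hk)).imp fun a ha => ⟨mem_univ a, ha⟩
  obtain ⟨D, -, rfl⟩ := subset_map_iff.1 hDsub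
  have hD' : D.card = d := (card_map e).symm.trans hD
  refine ⟨(D, j.removeNth f),
    mem_goodSubcubes.2 ⟨hD', fun a ha => hfalse _ (mem_map_of_mem e ha), ?_⟩, by simp⟩
  rw [← subcubeConfig_map_succAbove S j hD' hD, Fin.insertNth_self_removeNth]
  exact hcopy

end Restriction

section Monotonicity
variable {n d : ℕ}

lemma card_filter_notMem_goodSubcubes_le (H : Set (Fin d → Bool))
    (S : Set (Fin (n + 1) → Bool)) (j : Fin (n + 1)) :
    #{P ∈ goodSubcubes H (n + 1) S | j ∉ P.1} ≤ 2 * maxGoodCount H n := by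
  rw [card_eq_sum_card_fiberwise (f := fun P => P.2 j) (t := univ)
    fun _ _ => mem_coe.2 (mem_univ _)]
  calc ∑ b, #{P ∈ {P ∈ goodSubcubes H (n + 1) S | j ∉ P.1} | P.2 j = b}
      ≤ ∑ _b : Bool, maxGoodCount H n := sum_le_sum fun b _ => by
        rw [filter_filter]
        exact (card_filter_goodSubcubes_le H S j b).trans (goodCount_le_maxGoodCount H _)
    _ = 2 * maxGoodCount H n := by simp [two_mul]

lemma goodCount_mul_le (H : Set (Fin d → Bool)) (S : Set (Fin (n + 1) → Bool)) :
    goodCount H (n + 1) S * (n + 1 - d) ≤ 2 * (n + 1) * maxGoodCount H n := by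
  have hcount : goodCount H (n + 1) S * (n + 1 - d) =
      ∑ j, #{P ∈ goodSubcubes H (n + 1) S | j ∉ P.1} := by
    have := sum_card_bipartiteAbove_eq_sum_card_bipartiteBelow (s := univ)
      (t := goodSubcubes H (n + 1) S) (r := fun j P => j ∉ P.1)
    simp only [bipartiteAbove, bipartiteBelow] at this
    rw [this, goodCount_eq_card, card_eq_sum_ones, sum_mul, one_mul]
    refine sum_congr rfl fun P hP => ?_
    rw [filter_notMem_eq_sdiff, card_univ_sdiff, Fintype.card_fin, (mem_goodSubcubes.1 hP).1]
  calc goodCount H (n + 1) S * (n + 1 - d)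
      = ∑ j, #{P ∈ goodSubcubes H (n + 1) S | j ∉ P.1} := hcount
    _ ≤ ∑ _j : Fin (n + 1), 2 * maxGoodCount H n :=
        sum_le_sum fun j _ => card_filter_notMem_goodSubcubes_le H S j
    _ = 2 * (n + 1) * maxGoodCount H n := by
        rw [sum_const, card_univ, Fintype.card_fin, smul_eq_mul]; ring

lemma exDensity_succ_le (H : Set (Fin d → Bool)) (hdn : d ≤ n) :
    exDensity H (n + 1) ≤ exDensity H n := by
  obtain ⟨S, hS⟩ := exists_goodCount_eq_maxGoodCount H (n + 1)
  have hmul := hS ▸ goodCount_mul_le H S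
  have hpow : 2 ^ (n + 1 - d) = 2 * 2 ^ (n - d) := by rw [Nat.sub_add_comm hdn, pow_succ']
  have hgap : 0 < n + 1 - d := by omega
  have hpos : 0 < n.choose d := Nat.choose_pos hdn
  have hpos' : 0 < (n + 1).choose d := Nat.choose_pos (by omega)
  have key : maxGoodCount H (n + 1) * (n.choose d * 2 ^ (n - d)) ≤
      maxGoodCount H n * ((n + 1).choose d * 2 ^ (n + 1 - d)) := by
    refine Nat.le_of_mul_le_mul_right ?_ hgap
    calc maxGoodCount H (n + 1) * (n.choose d * 2 ^ (n - d)) * (n + 1 - d)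
        = maxGoodCount H (n + 1) * (n + 1 - d) * (n.choose d * 2 ^ (n - d)) := by ring
      _ ≤ 2 * (n + 1) * maxGoodCount H n * (n.choose d * 2 ^ (n - d)) := by gcongr
      _ = maxGoodCount H n * 2 ^ (n + 1 - d) * (n.choose d * (n + 1)) := by rw [hpow]; ring
      _ = maxGoodCount H n * ((n + 1).choose d * 2 ^ (n + 1 - d)) * (n + 1 - d) := by
        rw [Nat.choose_mul_succ_eq]; ring
  rw [exDensity_eq, exDensity_eq, div_le_div_iff₀ (by positivity) (by positivity)]
  exact_mod_cast key

end Monotonicity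

/-- for every configuration `H ⊆ V(Q_d)` and every positive integer `d`,
the `d`-cube density `π(H,d) = lim_{n→∞} ex(H,d,n)` exists and is at least `d!/d^d`. -/
theorem stmt16 {d : ℕ} (hd : 0 < d) (H : Set (Fin d → Bool)) :
    ∃ L : ℝ, Filter.Tendsto (fun n => exDensity H n) Filter.atTop (nhds L) ∧
      (d.factorial : ℝ) / (d : ℝ) ^ d ≤ L := by
  set g : ℕ → ℝ := fun k => exDensity H (k + d)
  have hg : Antitone g := antitone_nat_of_succ_le fun k => by
    simpa only [g, Nat.add_right_comm k 1 d] using exDensity_succ_le H (Nat.le_add_left d k)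
  have hbound : ∀ k, (d.factorial : ℝ) / (d : ℝ) ^ d ≤ g k := fun k =>
    calc (d.factorial : ℝ) / (d : ℝ) ^ d ≤ exDensity H (d * (k + 1)) :=
          factorial_div_pow_le_exDensity_mul H k.succ_pos
      _ = g (d * k) := by rw [mul_add_one]
      _ ≤ g k := hg (Nat.le_mul_of_pos_left k hd)
  refine ⟨⨅ k, g k, ?_, le_ciInf hbound⟩
  exact (Filter.tendsto_add_atTop_iff_nat d).1
    (tendsto_atTop_ciInf hg ⟨_, Set.forall_mem_range.2 hbound⟩)
end
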